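/- For every n ≥ 1, the burning number of the path graph P_n equals ⌈√n⌉: the minimum, over all burnings of P_n, of the end time T is exactly the smallest integer greater than or equal to √n. -/

import Mathlib

open SimpleGraph

/-- The path graph `P_n` with vertices `1, …, n` (represented by `Fin n`,
vertex `i+1` corresponds to index `i`) and edges `{i, i+1}`. -/
def pathG (n : ℕ) : SimpleGraph (Fin n) where
  Adj v w := v.val + 1 = w.val ∨ w.val + 1 = v.val
  symm := ⟨by intro v w h; tauto⟩
  loopless := ⟨by intro v h; rcases h with h | h <;> omega⟩

/-- `(s 0, …, s (k-1))` is a burning sequence of `G` (written `1`-based in the paper: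
`d(v_i, v_j) ≥ j - i + 1` for `i < j`, and every vertex `v` satisfies
`d(v_i, v) ≤ k + 1 - i` for some `i`). Distances are `ℕ∞`-valued. -/
def IsBurningSeq {V : Type*} (G : SimpleGraph V) {k : ℕ} (s : Fin k → V) : Prop :=
  1 ≤ k ∧
  (∀ i j : Fin k, i < j → ((j.val - i.val + 1 : ℕ) : ℕ∞) ≤ G.edist (s i) (s j)) ∧
  (∀ v : V, ∃ i : Fin k, G.edist (s i) v ≤ ((k - i.val : ℕ) : ℕ∞))

/-- The burning time function `λ(v) = min_{1 ≤ i ≤ k} (i + d(v_i, v))`. -/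
noncomputable def burnTime {V : Type*} (G : SimpleGraph V) {k : ℕ} (s : Fin k → V)
    (v : V) : ℕ :=
  (⨅ i : Fin k, ((i.val + 1 : ℕ) : ℕ∞) + G.edist (s i) v).toNat

/-- The end time `T = max_{v ∈ V} λ(v)` of a burning. -/
noncomputable def endTime {V : Type*} [Fintype V] (G : SimpleGraph V) {k : ℕ}
    (s : Fin k → V) : ℕ :=
  Finset.univ.sup fun v => burnTime G s v

/-!
A source lit at step `i` has, by time `T`, burned at most the `2 (T - i) - 1` vertices within
distance `T - i` of it, so a burning of `P_n` ending at time `T` gives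
`n ≤ ∑_{i < T} (2 (T - i) - 1) = T²`. Conversely, for `m = ⌈√n⌉` the vertices `0, …, n - 1` lie
in the blocks `[t², (t + 1)² - 1]`, `t < m`, of radius `t` around `t (t + 1)`; lighting these
centres from the largest block down gives a burning sequence ending at time `m`, except for `P_2`,
whose two vertices are too close to carry two sources.
-/

open SimpleGraph Finset

section Burning

variable {V : Type*} {G : SimpleGraph V} {k : ℕ} {s : Fin k → V}

theorem IsBurningSeq.burnTime_le_iff (hs : IsBurningSeq G s) {v : V} {T : ℕ} :
    burnTime G s v ≤ T ↔ ∃ i : Fin k, ((i.val + 1 : ℕ) : ℕ∞) + G.edist (s i) v ≤ T := by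
  obtain ⟨j, hj⟩ := hs.2.2 v
  have hx : (⨅ i : Fin k, ((i.val + 1 : ℕ) : ℕ∞) + G.edist (s i) v) ≠ ⊤ :=
    ne_top_of_le_ne_top (WithTop.add_ne_top.2
      ⟨ENat.natCast_ne_top _, ne_top_of_le_ne_top (ENat.natCast_ne_top _) hj⟩) (iInf_le _ j)
  rw [burnTime, ← Nat.cast_le (α := ℕ∞), ENat.natCast_toNat hx,
    ← ENat.lt_add_one_iff (ENat.natCast_ne_top T), iInf_lt_iff]
  simp only [ENat.lt_add_one_iff (ENat.natCast_ne_top T)]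

theorem IsBurningSeq.endTime_le_iff [Fintype V] (hs : IsBurningSeq G s) {T : ℕ} :
    endTime G s ≤ T ↔ ∀ v, ∃ i : Fin k, ((i.val + 1 : ℕ) : ℕ∞) + G.edist (s i) v ≤ T := by
  simp only [endTime, Finset.sup_le_iff, mem_univ, true_implies, hs.burnTime_le_iff]

end Burning

section PathGraph

variable {n : ℕ}

theorem pathG_edist_le_of_add_eq (d : ℕ) (u v : Fin n) (h : u.val + d = v.val) :
    (pathG n).edist u v ≤ d := by
  induction d generalizing u with
  | zero => simp [Fin.ext (by omega : u.val = v.val)]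
  | succ d ih =>
    let w : Fin n := ⟨u.val + 1, by omega⟩
    calc (pathG n).edist u v ≤ (pathG n).edist u w + (pathG n).edist w v :=
          SimpleGraph.edist_triangle
      _ ≤ 1 + d := add_le_add (edist_eq_one_iff_adj.2 (Or.inl rfl)).le (ih w (by simp [w]; omega))
      _ = (d + 1 : ℕ) := by push_cast; ring

theorem dist_le_length_of_walk_pathG {u v : Fin n} (p : (pathG n).Walk u v) :
    Nat.dist u v ≤ p.length := by
  induction p with
  | nil => simp
  | @cons a b c hadj p ih =>
    have hab : Nat.dist a b = 1 := by rcases hadj with h | h <;> simp [Nat.dist] <;> omega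
    have := Nat.dist.triangle_inequality a b c
    rw [Walk.length_cons]
    omega

theorem pathG_edist (u v : Fin n) : (pathG n).edist u v = Nat.dist u v := by
  refine le_antisymm ?_ (le_iInf fun p => Nat.cast_le.2 (dist_le_length_of_walk_pathG p))
  rcases le_total u.val v.val with h | h
  · simpa [Nat.dist_eq_sub_of_le h] using pathG_edist_le_of_add_eq (v - u) u v (by omega)
  · simpa [SimpleGraph.edist_comm, Nat.dist_eq_sub_of_le_right h] using
      pathG_edist_le_of_add_eq (u - v) v u (by omega)

end PathGraph

theorem sum_range_two_mul_sub_sub_one (T : ℕ) : ∑ i ∈ range T, (2 * (T - i) - 1) = T * T := by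
  induction T with
  | zero => simp
  | succ T ih =>
    rw [sum_range_succ']
    simp only [Nat.add_sub_add_right, ih]
    ring_nf
    omega

theorem card_ball_le {n : ℕ} (c i T : ℕ) :
    #{v : Fin n | i + 1 + Nat.dist c v ≤ T} ≤ 2 * (T - i) - 1 := by
  calc #{v : Fin n | i + 1 + Nat.dist c v ≤ T}
      ≤ #(Icc ((c : ℤ) - (T - i) + 1) (c + (T - i) - 1)) := by
        refine card_le_card_of_injOn (fun v => (v : ℤ)) (fun v hv => ?_) (fun v _ w _ h => ?_)
        · rw [SetLike.mem_coe, mem_filter] at hv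
          simp only [Nat.dist] at hv
          simp only [mem_coe, mem_Icc]
          omega
        · exact Fin.ext (by simpa using h)
    _ = 2 * (T - i) - 1 := by
        rw [Int.card_Icc]
        omega

theorem le_mul_self_of_forall_exists_dist_le {n k T : ℕ} (c : Fin k → ℕ)
    (h : ∀ v : Fin n, ∃ i : Fin k, i.val + 1 + Nat.dist (c i) v ≤ T) : n ≤ T * T := by
  classical
  let ball (i : Fin k) : Finset (Fin n) := {v | i.val + 1 + Nat.dist (c i) v ≤ T}
  let f (i : ℕ) : ℕ := 2 * (T - i) - 1
  calc n = #(univ : Finset (Fin n)) := (card_fin n).symm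
    _ ≤ #(univ.biUnion ball) := card_le_card fun v _ => by simpa [ball] using h v
    _ ≤ ∑ i, #(ball i) := card_biUnion_le
    _ ≤ ∑ i : Fin k, f i := sum_le_sum fun i _ => card_ball_le _ _ _
    _ = ∑ i ∈ range k, f i := Fin.sum_univ_eq_sum_range f k
    _ = ∑ i ∈ range k with i < T, f i :=
        (sum_filter_of_ne fun i _ hi => by simp only [f] at hi; omega).symm
    _ ≤ ∑ i ∈ range T, f i := sum_le_sum_of_subset fun i => by simp
    _ = T * T := sum_range_two_mul_sub_sub_one T

section Construction

/-- The centre `t (t + 1)` of the block `[t², (t + 1)² - 1]`, moved back onto the path when it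
overhangs it, which can only happen for the largest block. -/
def pathCenter (n t : ℕ) : ℕ := min (t * (t + 1)) (n - 1)

variable {n m : ℕ}

theorem pathCenter_lt (hn : 0 < n) (t : ℕ) : pathCenter n t < n := by
  unfold pathCenter; omega

theorem pathCenter_eq (h1 : (m - 1) * (m - 1) < n) {t : ℕ} (ht : t + 1 < m) :
    pathCenter n t = t * (t + 1) := by
  have : t * (t + 1) ≤ (m - 1) * (m - 1) := Nat.mul_le_mul (by omega) (by omega)
  unfold pathCenter; omega

theorem dist_pathCenter_sqrt_le {v : ℕ} (hv : v < n) :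
    Nat.dist (pathCenter n (Nat.sqrt v)) v ≤ Nat.sqrt v := by
  have hlo := Nat.sqrt_le v
  have hhi := Nat.sqrt_le_add v
  unfold pathCenter Nat.dist
  rw [Nat.mul_succ]
  omega

theorem pathCenter_add_le (h1 : (m - 1) * (m - 1) < n) (hn2 : n ≠ 2) {t' t : ℕ} (htt : t' < t)
    (ht : t < m) : pathCenter n t' + (t - t' + 1) ≤ pathCenter n t := by
  obtain ⟨d, rfl⟩ : ∃ d, t = t' + 1 + d := ⟨t - t' - 1, by omega⟩
  rw [pathCenter_eq h1 (by omega), show t' + 1 + d - t' + 1 = d + 2 by omega]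
  refine le_min (by nlinarith) ?_
  by_cases hc : t' + 1 + d + 1 < m
  · have : (t' + 1 + d) * (t' + 1 + d + 1) ≤ (m - 1) * (m - 1) :=
      Nat.mul_le_mul (by omega) (by omega)
    have : t' * (t' + 1) + (d + 2) ≤ (t' + 1 + d) * (t' + 1 + d + 1) := by nlinarith
    omega
  · obtain rfl : m = t' + 1 + d + 1 := by omega
    rw [Nat.add_sub_cancel] at h1
    rcases Nat.eq_zero_or_pos (t' + d) with h | h
    · obtain ⟨rfl, rfl⟩ : t' = 0 ∧ d = 0 := by omega
      omega
    · have : t' * (t' + 1) + (d + 2) + 1 ≤ n := by nlinarith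
      omega

def pathBurning (hn : 0 < n) (m : ℕ) (j : Fin m) : Fin n :=
  ⟨pathCenter n (m - 1 - j), pathCenter_lt hn _⟩

theorem exists_add_dist_pathBurning_le (hn : 0 < n) (h2 : n ≤ m * m) (v : Fin n) :
    ∃ j : Fin m, j.val + 1 + Nat.dist (pathBurning hn m j) v ≤ m := by
  have ht : Nat.sqrt v < m := Nat.sqrt_lt.2 (by omega)
  refine ⟨⟨m - 1 - Nat.sqrt v, by omega⟩, ?_⟩
  have := dist_pathCenter_sqrt_le v.isLt
  simp only [pathBurning, show m - 1 - (m - 1 - Nat.sqrt v) = Nat.sqrt v by omega]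
  omega

theorem isBurningSeq_pathBurning (h1 : (m - 1) * (m - 1) < n) (h2 : n ≤ m * m) (hn2 : n ≠ 2) :
    IsBurningSeq (pathG n) (pathBurning (by omega) m) := by
  refine ⟨by nlinarith, fun i j hij => ?_, fun v => ?_⟩
  · have := pathCenter_add_le h1 hn2 (t' := m - 1 - j) (t := m - 1 - i) (by omega) (by omega)
    rw [pathG_edist, Nat.cast_le]
    simp only [pathBurning, Nat.dist]
    omega
  · obtain ⟨j, hj⟩ := exists_add_dist_pathBurning_le (by omega) h2 v
    exact ⟨j, by rw [pathG_edist, Nat.cast_le]; omega⟩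

theorem endTime_pathBurning_le (h1 : (m - 1) * (m - 1) < n) (h2 : n ≤ m * m) (hn2 : n ≠ 2) :
    endTime (pathG n) (pathBurning (by omega) m) ≤ m := by
  refine (isBurningSeq_pathBurning h1 h2 hn2).endTime_le_iff.2 fun v => ?_
  obtain ⟨j, hj⟩ := exists_add_dist_pathBurning_le (by omega) h2 v
  exact ⟨j, by rw [pathG_edist]; exact_mod_cast hj⟩

theorem isBurningSeq_pathG_two : IsBurningSeq (pathG 2) fun _ : Fin 1 => 0 := by
  refine ⟨le_rfl, fun i j hij => by omega, fun v => ⟨0, ?_⟩⟩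
  rw [pathG_edist, Nat.cast_le]
  simp only [Nat.dist]
  omega

theorem exists_isBurningSeq_pathG_endTime_le {n m : ℕ} (h1 : (m - 1) * (m - 1) < n)
    (h2 : n ≤ m * m) :
    ∃ (k : ℕ) (s : Fin k → Fin n), IsBurningSeq (pathG n) s ∧ endTime (pathG n) s ≤ m := by
  rcases eq_or_ne n 2 with rfl | hn2
  · have hm : 2 ≤ m := by nlinarith
    refine ⟨1, _, isBurningSeq_pathG_two, isBurningSeq_pathG_two.endTime_le_iff.2 fun v => ⟨0, ?_⟩⟩
    rw [pathG_edist]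
    norm_cast
    simp only [Nat.dist]
    omega
  · exact ⟨m, _, isBurningSeq_pathBurning h1 h2 hn2, endTime_pathBurning_le h1 h2 hn2⟩

end Construction

theorem IsBurningSeq.le_endTime_mul_self {n k : ℕ} {s : Fin k → Fin n}
    (hs : IsBurningSeq (pathG n) s) : n ≤ endTime (pathG n) s * endTime (pathG n) s := by
  refine le_mul_self_of_forall_exists_dist_le (fun i => s i) fun v => ?_
  obtain ⟨i, hi⟩ := hs.endTime_le_iff.1 le_rfl v
  rw [pathG_edist] at hi
  exact ⟨i, by exact_mod_cast hi⟩

theorem Nat.ceil_sqrt_le_iff {n T : ℕ} : ⌈√(n : ℝ)⌉₊ ≤ T ↔ n ≤ T * T := by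
  rw [Nat.ceil_le, Real.sqrt_le_left (Nat.cast_nonneg T), ← Nat.cast_pow, Nat.cast_le, sq]

/-- For every `n ≥ 1`, the burning number of the path graph `P_n`
equals `⌈√n⌉`: the least end time over all burnings of `P_n` is `⌈√n⌉`. -/
theorem stmt_11 (n : ℕ) (hn : 1 ≤ n) :
    IsLeast {T : ℕ | ∃ (k : ℕ) (s : Fin k → Fin n),
        IsBurningSeq (pathG n) s ∧ endTime (pathG n) s = T}
      ⌈Real.sqrt n⌉₊ := by
  set m := ⌈Real.sqrt n⌉₊
  have hm : ∀ T, m ≤ T ↔ n ≤ T * T := fun T => Nat.ceil_sqrt_le_iff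
  have h1 : (m - 1) * (m - 1) < n := by
    by_contra! h
    have := (hm (m - 1)).2 h
    have := (hm 0).1
    omega
  refine ⟨?_, fun T ⟨k, s, hs, hT⟩ => hT ▸ (hm _).2 hs.le_endTime_mul_self⟩
  obtain ⟨k, s, hs, hle⟩ := exists_isBurningSeq_pathG_endTime_le h1 ((hm m).1 le_rfl)
  exact ⟨k, s, hs, le_antisymm hle ((hm _).2 hs.le_endTime_mul_self)⟩
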